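/- In a rooted phylogenetic network with no redundant nodes, the number of tree-node components other than the one containing the root is at most the number of reticulation components, since the root of each non-root tree-node component is the child of the lowest reticulate node of a distinct reticulation component. -/

import Mathlib

open Relation

variable {V : Type*}

/-- Indegree of a node in a digraph given by an edge relation. -/
noncomputable def indeg (E : V → V → Prop) (v : V) : ℕ := Set.ncard {u | E u v}

/-- Outdegree of a node in a digraph given by an edge relation. -/
noncomputable def outdeg (E : V → V → Prop) (v : V) : ℕ := Set.ncard {w | E v w}

/-- A directed path from `x` to `y` in the digraph `E`, recorded as the list of its nodes. -/
def IsDirPathE (E : V → V → Prop) (x y : V) (p : List V) : Prop :=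
  p.head? = some x ∧ p.getLast? = some y ∧ p.Chain' E

/-- `Dom E root x y`: `x` is a dominator of `y`, i.e. `x` is an ancestor of `y` and every
directed path from `root` to `y` contains `x`. -/
def Dom (E : V → V → Prop) (root x y : V) : Prop :=
  Relation.TransGen E x y ∧ ∀ p, IsDirPathE E root y p → x ∈ p

/-- A rooted phylogenetic network: a rooted acyclic digraph with a unique root of indegree 0
and outdegree ≥ 1, in which every non-root node has indegree 1 or outdegree 1, and every node
is reachable from the root. -/
structure RPN (V : Type*) [Fintype V] where
  E : V → V → Prop
  root : V
  acyclic : ∀ v, ¬ Relation.TransGen E v v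
  root_indeg : indeg E root = 0
  root_outdeg : 1 ≤ outdeg E root
  degree_cond : ∀ v, v ≠ root → indeg E v = 1 ∨ outdeg E v = 1
  reachable : ∀ v, Relation.ReflTransGen E root v

namespace RPN

variable [Fintype V] (N : RPN V)

/-- A leaf: indegree 1 and outdegree 0. -/
def isLeaf (v : V) : Prop := indeg N.E v = 1 ∧ outdeg N.E v = 0

/-- A reticulate node: indegree at least 2. -/
def isRetic (v : V) : Prop := 2 ≤ indeg N.E v

/-- A tree node: the root, or a node of indegree 1 and outdegree at least 2. -/
def isTreeN (v : V) : Prop := v = N.root ∨ (indeg N.E v = 1 ∧ 2 ≤ outdeg N.E v)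

/-- A redundant node: indegree 1 and outdegree 1. -/
def isRedund (v : V) : Prop := indeg N.E v = 1 ∧ outdeg N.E v = 1

/-- A directed path from `x` to `y` in `N`. -/
def IsDirPath (x y : V) (p : List V) : Prop := IsDirPathE N.E x y p

/-- `x` lies on every directed path from the root to `y`. -/
def Dominates (x y : V) : Prop := ∀ p, N.IsDirPath N.root y p → x ∈ p

/-- A node is visible if it lies on every root-to-`ℓ` path for some leaf `ℓ`. -/
def Visible (x : V) : Prop := ∃ ℓ, N.isLeaf ℓ ∧ N.Dominates x ℓ

/-- Tree-child: every non-leaf node has a child that is a leaf, a tree node, or a redundant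
node. -/
def TreeChild : Prop :=
  ∀ u, ¬ N.isLeaf u → ∃ c, N.E u c ∧ (N.isLeaf c ∨ N.isTreeN c ∨ N.isRedund c)

/-- Edge of the subgraph induced by the tree nodes. -/
def treeE (u v : V) : Prop := N.E u v ∧ N.isTreeN u ∧ N.isTreeN v

/-- Undirected adjacency in the subgraph induced by the tree nodes. -/
def treeAdj (u v : V) : Prop := N.isTreeN u ∧ N.isTreeN v ∧ (N.E u v ∨ N.E v u)

/-- The tree-node component of a tree node `u`. -/
def treeComp (u : V) : Set V := {v | Relation.ReflTransGen N.treeAdj u v}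

/-- Edge of the subgraph induced by the reticulate nodes. -/
def reticE (u v : V) : Prop := N.E u v ∧ N.isRetic u ∧ N.isRetic v

/-- Undirected adjacency in the subgraph induced by the reticulate nodes. -/
def reticAdj (u v : V) : Prop := N.isRetic u ∧ N.isRetic v ∧ (N.E u v ∨ N.E v u)

/-- The reticulation component of a reticulate node `u`. -/
def reticComp (u : V) : Set V := {v | Relation.ReflTransGen N.reticAdj u v}

open Classical in
/-- The compression quotient map: each tree node is sent to its tree-node component, each
reticulate node to its reticulation component, and every other node to itself (as a
singleton set). -/
noncomputable def comp (u : V) : Set V :=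
  if N.isTreeN u then N.treeComp u else if N.isRetic u then N.reticComp u else {u}

/-- Edge relation of the compression `N̄`: an edge between the (distinct) images of the
endpoints of each edge of `N`. -/
def compE (A B : Set V) : Prop :=
  A ≠ B ∧ ∃ u v, N.E u v ∧ N.comp u = A ∧ N.comp v = B

/-- `N` is binary: reticulate nodes have indegree exactly 2, tree nodes outdegree exactly 2. -/
def Binary : Prop :=
  (∀ v, N.isRetic v → indeg N.E v = 2) ∧ (∀ v, N.isTreeN v → outdeg N.E v = 2)

/-- `N` is galled: every reticulate node `r` has a tree-node ancestor `w` with two internally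
disjoint directed paths from `w` to `r` in which all nodes except `r` are tree nodes. -/
def Galled : Prop :=
  ∀ r, N.isRetic r → ∃ w p q, N.isTreeN w ∧
    N.IsDirPath w r p ∧ N.IsDirPath w r q ∧ p ≠ q ∧
    (∀ x ∈ p.tail.dropLast, x ∉ q.tail.dropLast) ∧
    (∀ x ∈ p, x ≠ r → N.isTreeN x) ∧ (∀ x ∈ q, x ≠ r → N.isTreeN x)

/-- The spanning subgraph determined by a switching `s` choosing one parent of each
reticulate node. -/
def SpanE (s : V → V) (u v : V) : Prop := N.E u v ∧ (N.isRetic v → u = s v)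

/-- `S` is displayed (as a softwired cluster) at `u`: for some switching, the set of leaves
below `u` in the resulting spanning tree is exactly `S`. -/
def DisplayedAt (S : Set V) (u : V) : Prop :=
  ∃ s : V → V, (∀ v, N.isRetic v → N.E (s v) v) ∧
    {ℓ | N.isLeaf ℓ ∧ Relation.ReflTransGen (N.SpanE s) u ℓ} = S

/-- An isolated reticulate node: neither its parents nor its child are reticulate. -/
def IsolatedRetic (w : V) : Prop :=
  N.isRetic w ∧ (∀ x, N.E x w → ¬ N.isRetic x) ∧ (∀ y, N.E w y → ¬ N.isRetic y)

end RPN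

/-!
Let `C` be a tree-node component not containing the root and `u` a node of `C` minimal for
the ancestor order. The parent `p` of `u` is not a tree node (or `u` would not be minimal), so
without redundant nodes it is reticulate. Since `u` is not reticulate, `p` is the lowest node
of its reticulation component: every other node of that component is a proper ancestor of `p`,
because reticulate nodes have a single child. Sending `C` to the component of `p` is therefore
injective: the component determines its lowest node `p`, and `p` its only child `u`, whose
tree-node component is `C`.
-/

lemma eq_of_outdeg_eq_one {E : V → V → Prop} {r a b : V} (h : outdeg E r = 1)
    (ha : E r a) (hb : E r b) : a = b := by
  obtain ⟨x, hx⟩ := Set.ncard_eq_one.mp h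
  have ha' : a ∈ {w | E r w} := ha
  have hb' : b ∈ {w | E r w} := hb
  rw [hx] at ha' hb'
  rw [ha', hb']

namespace RPN

variable [Fintype V] (N : RPN V)

instance : Std.Symm N.treeAdj := ⟨fun _ _ h => ⟨h.2.1, h.1, h.2.2.symm⟩⟩

instance : Std.Symm N.reticAdj := ⟨fun _ _ h => ⟨h.2.1, h.1, h.2.2.symm⟩⟩

variable {N}

lemma ne_root_of_isRetic {r : V} (hr : N.isRetic r) : r ≠ N.root := by
  rintro rfl
  have := N.root_indeg
  rw [isRetic] at hr
  omega

lemma not_isRetic_of_isTreeN {v : V} (hv : N.isTreeN v) : ¬ N.isRetic v := by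
  rcases hv with rfl | ⟨hin, -⟩
  · exact fun h => ne_root_of_isRetic h rfl
  · rw [isRetic, hin]
    omega

lemma outdeg_eq_one_of_isRetic {r : V} (hr : N.isRetic r) : outdeg N.E r = 1 := by
  rcases N.degree_cond r (ne_root_of_isRetic hr) with h | h
  · rw [isRetic, h] at hr
    omega
  · exact h

lemma eq_of_reflTransGen_of_reflTransGen {a b : V} (hab : ReflTransGen N.E a b)
    (hba : ReflTransGen N.E b a) : a = b := by
  rcases reflTransGen_iff_eq_or_transGen.mp hab with h | h
  · exact h.symm
  · exact absurd (h.trans_left hba) (N.acyclic a)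

lemma reflTransGen_of_mem_reticComp {r₀ u₀ r : V} (hr₀u₀ : N.E r₀ u₀) (hu₀ : ¬ N.isRetic u₀)
    (hr : r ∈ N.reticComp r₀) : ReflTransGen N.E r r₀ := by
  induction hr with
  | refl => rfl
  | @tail b c _ hbc ih =>
    obtain ⟨hb, hc, hE | hE⟩ := hbc
    · rcases ih.cases_head with rfl | ⟨m, hbm, hmr₀⟩
      · exact absurd (eq_of_outdeg_eq_one (outdeg_eq_one_of_isRetic hb) hE hr₀u₀ ▸ hc) hu₀
      · rwa [eq_of_outdeg_eq_one (outdeg_eq_one_of_isRetic hb) hbm hE] at hmr₀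
    · exact ih.head hE

lemma eq_of_reticComp_eq {r₁ r₂ u₁ u₂ : V} (h₁ : N.E r₁ u₁) (hu₁ : ¬ N.isRetic u₁)
    (h₂ : N.E r₂ u₂) (hu₂ : ¬ N.isRetic u₂) (h : N.reticComp r₁ = N.reticComp r₂) : r₁ = r₂ := by
  have hr₂ : r₂ ∈ N.reticComp r₁ := h ▸ ReflTransGen.refl
  exact eq_of_reflTransGen_of_reflTransGen (reflTransGen_of_mem_reticComp h₂ hu₂ (symm hr₂))
    (reflTransGen_of_mem_reticComp h₁ hu₁ hr₂)

lemma isTreeN_of_mem_treeComp {u v : V} (hu : N.isTreeN u) (hv : v ∈ N.treeComp u) :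
    N.isTreeN v := by
  rcases hv.cases_tail with rfl | ⟨_, _, hadj⟩
  · exact hu
  · exact hadj.2.1

lemma treeComp_eq_of_mem {u v : V} (hv : v ∈ N.treeComp u) : N.treeComp v = N.treeComp u :=
  Set.ext fun _ => ⟨fun h => hv.trans h, fun h => (symm hv).trans h⟩

lemma isRetic_of_not_isTreeN (hnr : ∀ v, ¬ N.isRedund v) {p u : V} (hpu : N.E p u)
    (hp : ¬ N.isTreeN p) : N.isRetic p := by
  have hproot : p ≠ N.root := fun h => hp (Or.inl h)
  have hout : 0 < outdeg N.E p := (Set.ncard_pos (Set.toFinite _)).mpr ⟨u, hpu⟩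
  have hin : 0 < indeg N.E p := by
    rcases (N.reachable p).cases_tail with h | ⟨q, _, hqp⟩
    · exact absurd h hproot
    · exact (Set.ncard_pos (Set.toFinite _)).mpr ⟨q, hqp⟩
  have hnot : ¬ (indeg N.E p = 1 ∧ outdeg N.E p = 1) := hnr p
  rcases N.degree_cond p hproot with h | h
  · exact absurd (Or.inr ⟨h, by omega⟩) hp
  · rw [isRetic]
    omega

lemma wellFounded_transGen : WellFounded (TransGen N.E) :=
  haveI : IsTrans V (TransGen N.E) := ⟨fun _ _ _ => TransGen.trans⟩
  haveI : Std.Irrefl (TransGen N.E) := ⟨N.acyclic⟩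
  Finite.wellFounded_of_trans_of_irrefl _

lemma exists_isRetic_parent (hnr : ∀ v, ¬ N.isRedund v) {u : V} (hu : N.isTreeN u)
    (hroot : N.root ∉ N.treeComp u) :
    ∃ p v, N.isRetic p ∧ N.E p v ∧ N.isTreeN v ∧ N.treeComp u = N.treeComp v := by
  obtain ⟨v, hv, hmin⟩ := wellFounded_transGen.has_min (N.treeComp u) ⟨u, ReflTransGen.refl⟩
  have hvT : N.isTreeN v := isTreeN_of_mem_treeComp hu hv
  rcases (N.reachable v).cases_tail with h | ⟨p, _, hpv⟩
  · exact absurd (h ▸ hv) hroot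
  have hpT : ¬ N.isTreeN p := fun hp =>
    hmin p (hv.tail ⟨hvT, hp, Or.inr hpv⟩) (TransGen.single hpv)
  exact ⟨p, v, isRetic_of_not_isTreeN hnr hpv hpT, hpv, hvT, (treeComp_eq_of_mem hv).symm⟩

end RPN

/-- In a network with no redundant nodes, the number of tree-node components
other than the one containing the root is at most the number of reticulation components. -/
theorem stmt18 [Fintype V] (N : RPN V) (hnr : ∀ v, ¬ N.isRedund v) :
    Set.ncard {C : Set V | (∃ u, N.isTreeN u ∧ C = N.treeComp u) ∧ N.root ∉ C}
      ≤ Set.ncard {C : Set V | ∃ u, N.isRetic u ∧ C = N.reticComp u} := by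
  have key : ∀ C ∈ {C : Set V | (∃ u, N.isTreeN u ∧ C = N.treeComp u) ∧ N.root ∉ C},
      ∃ p v, N.isRetic p ∧ N.E p v ∧ N.isTreeN v ∧ C = N.treeComp v := by
    rintro C ⟨⟨u, hu, rfl⟩, hroot⟩
    exact RPN.exists_isRetic_parent hnr hu hroot
  have : Nonempty V := ⟨N.root⟩
  choose! p v hp hpv hv hCv using key
  refine Set.ncard_le_ncard_of_injOn (fun C => N.reticComp (p C))
    (fun C hC => ⟨p C, hp C hC, rfl⟩) (fun C₁ h₁ C₂ h₂ heq => ?_)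
  have hp₁₂ : p C₁ = p C₂ :=
    RPN.eq_of_reticComp_eq (hpv C₁ h₁) (RPN.not_isRetic_of_isTreeN (hv C₁ h₁))
      (hpv C₂ h₂) (RPN.not_isRetic_of_isTreeN (hv C₂ h₂)) heq
  have hv₁₂ : v C₁ = v C₂ := eq_of_outdeg_eq_one (RPN.outdeg_eq_one_of_isRetic (hp C₁ h₁))
    (hpv C₁ h₁) (hp₁₂ ▸ hpv C₂ h₂)
  rw [hCv C₁ h₁, hCv C₂ h₂, hv₁₂]
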